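/- Let f, g₀ : ℂ → ℂ be entire with g₀(0) = 1. Then the function f̃ : ℂ² → ℂ defined by f̃(t, z) = (t·f(t)·g₀(z) − z·f(z)·g₀(t))/(t − z) for t ≠ z and f̃(z, z) = z·g₀(z)·f′(z) − z·f(z)·g₀′(z) + f(z)·g₀(z) is holomorphic (complex differentiable) on all of ℂ × ℂ. -/

import Mathlib

open Complex

/-- The shift operator `T_z` for the Pommiez operator `D_{0,g₀}`. -/
noncomputable def shiftT (g₀ f : ℂ → ℂ) (z : ℂ) : ℂ → ℂ := fun t =>
  if t = z then z * g₀ z * deriv f z - z * f z * deriv g₀ z + f z * g₀ z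
  else (t * f t * g₀ z - z * f z * g₀ t) / (t - z)

/-!
Writing `Δh(z, t) = dslope h z t` for the divided difference `(h t - h z) / (t - z)`, one has
`f̃(t, z) = g₀ z · Δ(w ↦ w f w)(z, t) - z f z · Δg₀(z, t)`. For entire `h`,
`Δh(z, t) = ∫₀¹ h'(z + s (t - z)) ds`, and since `h'` is again entire, differentiation under the
integral sign shows that `Δh` is holomorphic in both variables jointly.
-/

open Set Filter Metric Function
open scoped Interval

theorem intervalIntegral.hasFDerivAt_integral_of_continuous_fderiv
    {𝕜 E H : Type*} [RCLike 𝕜] [NormedAddCommGroup E] [NormedSpace ℝ E] [NormedSpace 𝕜 E]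
    [NormedAddCommGroup H] [NormedSpace 𝕜 H] [ProperSpace H]
    {F : H → ℝ → E} {F' : H → ℝ → H →L[𝕜] E} {a b : ℝ}
    (hF : ∀ x, Continuous (F x)) (hF' : Continuous (uncurry F'))
    (hF_deriv : ∀ x t, HasFDerivAt (F · t) (F' x t) x) (x₀ : H) :
    HasFDerivAt (fun x => ∫ t in a..b, F x t) (∫ t in a..b, F' x₀ t) x₀ := by
  obtain ⟨C, hC⟩ := ((isCompact_closedBall x₀ 1).prod isCompact_uIcc).exists_bound_of_continuousOn
    (hF'.continuousOn (s := closedBall x₀ 1 ×ˢ [[a, b]]))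
  exact hasFDerivAt_integral_of_dominated_of_fderiv_le (bound := fun _ => C)
    (ball_mem_nhds x₀ one_pos) (.of_forall fun x => (hF x).aestronglyMeasurable)
    ((hF x₀).intervalIntegrable a b) (hF'.comp (Continuous.prodMk_right x₀)).aestronglyMeasurable
    (.of_forall fun t ht x hx => hC (x, t) ⟨ball_subset_closedBall hx, uIoc_subset_uIcc ht⟩)
    intervalIntegrable_const (.of_forall fun t _ x _ => hF_deriv x t)

theorem intervalIntegral.differentiable_integral_of_continuous_fderiv
    {𝕜 E H : Type*} [RCLike 𝕜] [NormedAddCommGroup E] [NormedSpace ℝ E] [NormedSpace 𝕜 E]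
    [NormedAddCommGroup H] [NormedSpace 𝕜 H] [ProperSpace H]
    {F : H → ℝ → E} {F' : H → ℝ → H →L[𝕜] E} {a b : ℝ}
    (hF : ∀ x, Continuous (F x)) (hF' : Continuous (uncurry F'))
    (hF_deriv : ∀ x t, HasFDerivAt (F · t) (F' x t) x) :
    Differentiable 𝕜 (fun x => ∫ t in a..b, F x t) := fun x₀ =>
  (hasFDerivAt_integral_of_continuous_fderiv hF hF' hF_deriv x₀).differentiableAt

section dslope

variable {E : Type*} [NormedAddCommGroup E] [NormedSpace ℂ E] [CompleteSpace E]

theorem dslope_eq_integral_deriv {h : ℂ → E} (hh : Differentiable ℂ h) (a b : ℂ) :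
    dslope h a b = ∫ s in (0 : ℝ)..1, deriv h (a + s • (b - a)) := by
  rcases eq_or_ne b a with rfl | hba
  · simp [dslope_same]
  · have hftc := intervalIntegral.integral_unitInterval_deriv_eq_sub (z₀ := a) (z₁ := b - a)
      (hh.deriv.continuous.comp (by fun_prop)).continuousOn fun s _ => (hh _).hasDerivAt
    rw [add_sub_cancel, ← sub_smul_dslope h a b] at hftc
    exact (smul_right_injective E (sub_ne_zero.2 hba) hftc).symm

theorem differentiable_uncurry_dslope {h : ℂ → E} (hh : Differentiable ℂ h) :
    Differentiable ℂ (uncurry (dslope h)) := by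
  set L : ℝ → ℂ × ℂ →L[ℂ] ℂ := fun s => .fst ℂ ℂ ℂ + s • (.snd ℂ ℂ ℂ - .fst ℂ ℂ ℂ)
  have hL : ∀ s p, HasFDerivAt (fun q : ℂ × ℂ => q.1 + s • (q.2 - q.1)) (L s) p := fun s p =>
    hasFDerivAt_fst.add ((hasFDerivAt_snd.sub hasFDerivAt_fst).const_smul s)
  have hsegment : Continuous fun x : (ℂ × ℂ) × ℝ => x.1.1 + x.2 • (x.1.2 - x.1.1) := by
    fun_prop
  have hintegral : uncurry (dslope h) =
      fun p : ℂ × ℂ => ∫ s in (0 : ℝ)..1, deriv h (p.1 + s • (p.2 - p.1)) :=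
    funext fun p => dslope_eq_integral_deriv hh p.1 p.2
  rw [hintegral]
  refine intervalIntegral.differentiable_integral_of_continuous_fderiv
    (F' := fun (p : ℂ × ℂ) (s : ℝ) => (fderiv ℂ (deriv h) (p.1 + s • (p.2 - p.1))).comp (L s))
    (fun p => hh.deriv.continuous.comp (hsegment.comp (Continuous.prodMk_right p))) ?_
    fun p s => (hh.deriv _).hasFDerivAt.comp p (hL s p)
  exact ((hh.deriv.contDiff (n := 1)).continuous_fderiv one_ne_zero |>.comp hsegment).clm_comp
    (continuous_const.add (continuous_snd.smul continuous_const))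

end dslope

theorem shiftT_eq_dslope {f : ℂ → ℂ} (g₀ : ℂ → ℂ) {z : ℂ} (hf : DifferentiableAt ℂ f z) (t : ℂ) :
    shiftT g₀ f z t = g₀ z * dslope (fun w => w * f w) z t - z * f z * dslope g₀ z t := by
  rcases eq_or_ne t z with rfl | htz
  · have hderiv : deriv (fun w => w * f w) t = f t + t * deriv f t := by
      simpa using deriv_fun_mul differentiableAt_id hf
    simp only [shiftT, if_pos, dslope_same, hderiv]
    ring
  · have htz' : t - z ≠ 0 := sub_ne_zero.2 htz
    simp only [shiftT, if_neg htz, dslope_of_ne _ htz, slope_def_field]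
    field_simp
    ring

theorem shiftT_differentiable_two_variables_general
    (f g₀ : ℂ → ℂ) (hf : Differentiable ℂ f) (hg₀ : Differentiable ℂ g₀) :
    Differentiable ℂ (fun p : ℂ × ℂ => shiftT g₀ f p.2 p.1) := by
  have hdslope_swap : ∀ {h : ℂ → ℂ}, Differentiable ℂ h →
      Differentiable ℂ fun p : ℂ × ℂ => dslope h p.2 p.1 := fun hh =>
    (differentiable_uncurry_dslope hh).comp (differentiable_snd.prodMk differentiable_fst)
  have hdslope_mul := hdslope_swap (differentiable_id.mul hf)
  have hdslope_g₀ := hdslope_swap hg₀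
  simp_rw [shiftT_eq_dslope g₀ (hf _)]
  fun_prop

/-- for entire `f, g₀` with `g₀(0) = 1`, the function
`f̃(t, z) = T_z(f)(t)` is holomorphic on all of `ℂ × ℂ`. -/
theorem shiftT_differentiable_two_variables
    (f g₀ : ℂ → ℂ) (hf : Differentiable ℂ f) (hg₀ : Differentiable ℂ g₀)
    (hg₀0 : g₀ 0 = 1) :
    Differentiable ℂ (fun p : ℂ × ℂ => shiftT g₀ f p.2 p.1) :=
  shiftT_differentiable_two_variables_general f g₀ hf hg₀
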